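/- Galilean spacetime extended with lightlike relatedness is definitionally equivalent to late classical spacetime: ⟨GalST, λ⟩ = ⟨ℝ⁴, ≡_S, ≡_T, Col, λ⟩ and LClassST = ⟨ℝ⁴, S, λ⟩ have exactly the same concepts. -/

import Mathlib

open FirstOrder Language Function Set

/-- Spacetime points: elements of ℝ⁴. -/
abbrev Pt : Type := Fin 4 → ℝ

/-- Lightlike relatedness λ. -/
def lightlike (p q : Pt) : Prop :=
  (p 0 - q 0) ^ 2 = (p 1 - q 1) ^ 2 + (p 2 - q 2) ^ 2 + (p 3 - q 3) ^ 2

/-- Absolute simultaneity S. -/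
def simul (p q : Pt) : Prop := p 0 = q 0

/-- The language of relativistic spacetime: one binary relation symbol. -/
def relLang : Language :=
  { Functions := fun _ => Empty, Relations := fun m => PLift (m = 2) }

/-- Relativistic spacetime RelST = ⟨ℝ⁴, λ⟩. -/
def relStr : relLang.Structure Pt where
  funMap := fun f => f.elim
  RelMap := fun r v =>
    lightlike (v (Fin.cast r.down.symm 0)) (v (Fin.cast r.down.symm 1))

/-- The language of late classical spacetime: two binary relation symbols. -/
def classLang : Language :=
  { Functions := fun _ => Empty, Relations := fun m => PLift (m = 2) ⊕ PLift (m = 2) }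

/-- Late classical spacetime LClassST = ⟨ℝ⁴, S, λ⟩. -/
def classStr : classLang.Structure Pt where
  funMap := fun f => f.elim
  RelMap := fun r v =>
    match r with
    | .inl ⟨h⟩ => simul (v (Fin.cast h.symm 0)) (v (Fin.cast h.symm 1))
    | .inr ⟨h⟩ => lightlike (v (Fin.cast h.symm 0)) (v (Fin.cast h.symm 1))

/-- `ConOf L str R` : the `n`-ary relation `R` on ℝ⁴ is a concept of the structure
`⟨ℝ⁴; str⟩`, i.e. first-order definable without parameters. -/
def ConOf (L : Language) (str : L.Structure Pt) {n : ℕ} (R : Set (Fin n → Pt)) : Prop :=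
  letI := str
  (∅ : Set Pt).Definable L R

/-- Squared Euclidean length. -/
def sqEucl (p : Pt) : ℝ := p 0 ^ 2 + p 1 ^ 2 + p 2 ^ 2 + p 3 ^ 2

/-- Euclidean congruence: (p,q) ≡_E (r,s). -/
def euclCng (p q r s : Pt) : Prop := sqEucl (p - q) = sqEucl (r - s)

/-- Spatial congruence: (p,q) ≡_S (r,s). -/
def spatialCng (p q r s : Pt) : Prop := simul p q ∧ simul r s ∧ euclCng p q r s

/-- Temporal congruence: (p,q) ≡_T (r,s). -/
def temporalCng (p q r s : Pt) : Prop := p 0 - q 0 = r 0 - s 0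

/-- The ternary collinearity relation on ℝ⁴. -/
def Col (p q r : Pt) : Prop := (∃ a : ℝ, q = p + a • (r - p)) ∨ r = p

/-- The language of Galilean spacetime extended with lightlike relatedness,
⟨GalST, λ⟩ = ⟨ℝ⁴, ≡_S, ≡_T, Col, λ⟩: two 4-ary relation symbols, one ternary
and one binary. -/
def galLang : Language :=
  { Functions := fun _ => Empty,
    Relations := fun m => (PLift (m = 4) ⊕ PLift (m = 4)) ⊕ (PLift (m = 3) ⊕ PLift (m = 2)) }

/-- Galilean spacetime extended with lightlike relatedness,
⟨GalST, λ⟩ = ⟨ℝ⁴, ≡_S, ≡_T, Col, λ⟩. -/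
def galStr : galLang.Structure Pt where
  funMap := fun f => f.elim
  RelMap := fun r v =>
    match r with
    | .inl (.inl ⟨h⟩) =>
        spatialCng (v (Fin.cast h.symm 0)) (v (Fin.cast h.symm 1))
          (v (Fin.cast h.symm 2)) (v (Fin.cast h.symm 3))
    | .inl (.inr ⟨h⟩) =>
        temporalCng (v (Fin.cast h.symm 0)) (v (Fin.cast h.symm 1))
          (v (Fin.cast h.symm 2)) (v (Fin.cast h.symm 3))
    | .inr (.inl ⟨h⟩) =>
        Col (v (Fin.cast h.symm 0)) (v (Fin.cast h.symm 1)) (v (Fin.cast h.symm 2))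
    | .inr (.inr ⟨h⟩) =>
        lightlike (v (Fin.cast h.symm 0)) (v (Fin.cast h.symm 1))

/-!
Simultaneity is `≡_S(p, q, p, q)`, so every concept of LClassST is one of ⟨GalST, λ⟩.

Conversely, `S` and `λ` define in turn: co-location (distinct events are co-located iff they are
not simultaneous and all events lightlike to both of them are simultaneous), temporal midpoints and
hence `≡_T`, and `≡_S` (a spatial distance is the time light needs to cover it). Light also measures
the Euclidean length of 4-vectors: the light cone of `w` meets the slice of `c` in a sphere about
the place of `w` of radius `|w₀ - c₀|`, and a point `u` of that sphere with `u - w` orthogonal to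
`c - w` satisfies `|c - u|² = |c - w|²_E` by Pythagoras. Finally `Col` is definable from `≡_E`:
`q` lies on the line `pr` iff `q` is equidistant from any two points from which both `p` and `r`
are equidistant (otherwise reflect `q` in the line).
-/

namespace FirstOrder.Language

variable {L : Language} {α : Type*}

lemma Term.exists_eq_var [L.IsRelational] : ∀ t : L.Term α, ∃ a, t = var a
  | var a => ⟨a, rfl⟩
  | func f _ => isEmptyElim f

variable {M : Type*} {L₁ L₂ : Language} [L₁.IsRelational] [L₁.Structure M] [L₂.Structure M]

theorem BoundedFormula.exists_realize_iff_of_relMap_definable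
    (hrel : ∀ (m : ℕ) (R : L₁.Relations m),
      (∅ : Set M).Definable L₂ {v : Fin m → M | Structure.RelMap R v})
    {l : ℕ} (φ : L₁.BoundedFormula α l) :
    ∃ ψ : L₂.BoundedFormula α l, ∀ (v : α → M) xs, ψ.Realize v xs ↔ φ.Realize v xs := by
  induction φ with
  | falsum => exact ⟨⊥, fun _ _ => Iff.rfl⟩
  | equal t₁ t₂ =>
    obtain ⟨a, rfl⟩ := t₁.exists_eq_var
    obtain ⟨b, rfl⟩ := t₂.exists_eq_var
    exact ⟨(var a).bdEqual (var b), fun _ _ => Iff.rfl⟩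
  | @rel l m R ts =>
    choose g hg using fun i => (ts i).exists_eq_var
    obtain rfl : ts = fun i => var (g i) := funext hg
    obtain ⟨ψ, hψ⟩ := Set.empty_definable_iff.1 (hrel m R)
    refine ⟨(BoundedFormula.relabel g ψ : L₂.BoundedFormula α (l + 0)), fun v xs => ?_⟩
    rw [BoundedFormula.realize_relabel,
      Subsingleton.elim (α := Fin 0 → M) (xs ∘ Fin.natAdd l) default]
    exact (Set.ext_iff.1 hψ _).symm
  | imp φ₁ φ₂ ih₁ ih₂ =>
    obtain ⟨ψ₁, h₁⟩ := ih₁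
    obtain ⟨ψ₂, h₂⟩ := ih₂
    exact ⟨ψ₁.imp ψ₂, fun v xs => by simp only [BoundedFormula.realize_imp, h₁, h₂]⟩
  | all φ ih =>
    obtain ⟨ψ, h⟩ := ih
    exact ⟨ψ.all, fun v xs => by simp only [BoundedFormula.realize_all, h]⟩

theorem _root_.Set.Definable.of_relMap_definable
    (hrel : ∀ (m : ℕ) (R : L₁.Relations m),
      (∅ : Set M).Definable L₂ {v : Fin m → M | Structure.RelMap R v})
    {s : Set (α → M)} (hs : (∅ : Set M).Definable L₁ s) : (∅ : Set M).Definable L₂ s := by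
  obtain ⟨φ, rfl⟩ := Set.empty_definable_iff.1 hs
  obtain ⟨ψ, hψ⟩ := BoundedFormula.exists_realize_iff_of_relMap_definable hrel φ
  exact Set.empty_definable_iff.2 ⟨ψ, Set.ext fun v => (hψ v default).symm⟩

end FirstOrder.Language

open EuclideanGeometry AffineSubspace in
theorem mem_affineSpan_pair_iff_forall_dist_eq {V P : Type*} [NormedAddCommGroup V]
    [InnerProductSpace ℝ V] [MetricSpace P] [NormedAddTorsor V P] {p r q : P} :
    q ∈ line[ℝ, p, r] ↔
      ∀ w w' : P, dist p w = dist p w' → dist r w = dist r w' → dist q w = dist q w' := by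
  refine ⟨fun hq w w' hp hr => ?_, fun h => ?_⟩
  · rw [← mem_perpBisector_iff_dist_eq] at hp hr ⊢
    exact affineSpan_pair_le_of_mem_of_mem hp hr hq
  · have hfix := h q (reflection line[ℝ, p, r] q)
      (dist_reflection_eq_of_mem _ (left_mem_affineSpan_pair ℝ p r) q).symm
      (dist_reflection_eq_of_mem _ (right_mem_affineSpan_pair ℝ p r) q).symm
    rw [dist_self, eq_comm, dist_eq_zero] at hfix
    exact (reflection_eq_self_iff q).1 hfix.symm

lemma eq_zero_of_sq_add_sq_add_sq {a b c : ℝ} (h : a ^ 2 + b ^ 2 + c ^ 2 = 0) :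
    a = 0 ∧ b = 0 ∧ c = 0 := by
  refine ⟨?_, ?_, ?_⟩ <;> nlinarith [sq_nonneg a, sq_nonneg b, sq_nonneg c]

lemma exists_orthogonal_sq_eq (a b c ρ : ℝ) :
    ∃ x y z : ℝ, a * x + b * y + c * z = 0 ∧ x ^ 2 + y ^ 2 + z ^ 2 = ρ ^ 2 := by
  by_cases hab : a ^ 2 + b ^ 2 = 0
  · obtain ⟨rfl, rfl⟩ : a = 0 ∧ b = 0 := ⟨by nlinarith, by nlinarith⟩
    exact ⟨ρ, 0, 0, by ring, by ring⟩
  · have hs : 0 < a ^ 2 + b ^ 2 := (add_nonneg (sq_nonneg a) (sq_nonneg b)).lt_of_ne' hab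
    obtain ⟨k, hk⟩ : ∃ k, k ^ 2 * (a ^ 2 + b ^ 2) = ρ ^ 2 :=
      ⟨ρ / √(a ^ 2 + b ^ 2), by rw [div_pow, Real.sq_sqrt hs.le]; field_simp⟩
    exact ⟨k * b, -(k * a), 0, by ring, by linear_combination hk⟩

def spatialDistSq (p q : Pt) : ℝ := (p 1 - q 1) ^ 2 + (p 2 - q 2) ^ 2 + (p 3 - q 3) ^ 2

def SameLoc (p q : Pt) : Prop := p 1 = q 1 ∧ p 2 = q 2 ∧ p 3 = q 3

def TimeMid (x m y : Pt) : Prop := x 0 + y 0 = 2 * m 0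

section Geometry

variable {a b c m p q r s u w x y : Pt}

lemma lightlike_iff : lightlike p q ↔ (p 0 - q 0) ^ 2 = spatialDistSq p q := Iff.rfl

lemma spatialCng_iff :
    spatialCng p q r s ↔ simul p q ∧ simul r s ∧ spatialDistSq p q = spatialDistSq r s := by
  unfold spatialCng euclCng sqEucl spatialDistSq simul
  simp only [Pi.sub_apply]
  constructor <;> rintro ⟨hpq, hrs, h⟩ <;> exact ⟨hpq, hrs, by rw [hpq, hrs] at *; linarith⟩

lemma SameLoc.spatialDistSq_left (h : SameLoc p q) (r : Pt) :
    spatialDistSq p r = spatialDistSq q r := by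
  obtain ⟨h1, h2, h3⟩ := h
  simp only [spatialDistSq, h1, h2, h3]

lemma SameLoc.spatialDistSq_right (h : SameLoc p q) (r : Pt) :
    spatialDistSq r p = spatialDistSq r q := by
  obtain ⟨h1, h2, h3⟩ := h
  simp only [spatialDistSq, h1, h2, h3]

lemma SameLoc.trans (hpq : SameLoc p q) (hqr : SameLoc q r) : SameLoc p r :=
  ⟨hpq.1.trans hqr.1, hpq.2.1.trans hqr.2.1, hpq.2.2.trans hqr.2.2⟩

lemma SameLoc.symm (h : SameLoc p q) : SameLoc q p := ⟨h.1.symm, h.2.1.symm, h.2.2.symm⟩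

lemma TimeMid.of_lightlike_of_sameLoc (hab : SameLoc a b) (hne : a 0 ≠ b 0)
    (ha : lightlike c a) (hb : lightlike c b) : TimeMid a c b := by
  rw [lightlike_iff, hab.spatialDistSq_right] at ha
  have : (a 0 - b 0) * (a 0 + b 0 - 2 * c 0) = 0 := by
    rw [lightlike_iff] at hb; linear_combination ha - hb
  exact eq_of_sub_eq_zero ((mul_eq_zero.1 this).resolve_left (sub_ne_zero.2 hne))

lemma spatialDistSq_nonneg (p q : Pt) : 0 ≤ spatialDistSq p q := by
  unfold spatialDistSq; positivity

lemma spatialDistSq_eq_zero_iff : spatialDistSq p q = 0 ↔ SameLoc p q := by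
  refine ⟨fun h => ?_, fun ⟨h1, h2, h3⟩ => by simp [spatialDistSq, h1, h2, h3]⟩
  obtain ⟨h1, h2, h3⟩ := eq_zero_of_sq_add_sq_add_sq h
  exact ⟨sub_eq_zero.1 h1, sub_eq_zero.1 h2, sub_eq_zero.1 h3⟩

lemma exists_lightlike_not_simul (h : ¬SameLoc p q) :
    ∃ u u', lightlike u p ∧ lightlike u q ∧ lightlike u' p ∧ lightlike u' q ∧ ¬simul u u' := by
  have hD : 0 < spatialDistSq p q :=
    (spatialDistSq_nonneg p q).lt_of_ne' (mt spatialDistSq_eq_zero_iff.1 h)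
  obtain ⟨d, hd, hd2⟩ : ∃ d, 0 < d ∧ d ^ 2 = spatialDistSq p q :=
    ⟨_, Real.sqrt_pos.2 hD, Real.sq_sqrt hD.le⟩
  set Δ := q 0 - p 0
  let pt (τ k : ℝ) : Pt :=
    ![p 0 + τ, p 1 + k * (q 1 - p 1), p 2 + k * (q 2 - p 2), p 3 + k * (q 3 - p 3)]
  have hp (τ k : ℝ) : lightlike (pt τ k) p ↔ τ ^ 2 = k ^ 2 * d ^ 2 := by
    simp [lightlike_iff, hd2, spatialDistSq, pt]
    ring_nf
  have hq (τ k : ℝ) : lightlike (pt τ k) q ↔ (τ - Δ) ^ 2 = (1 - k) ^ 2 * d ^ 2 := by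
    simp [lightlike_iff, hd2, spatialDistSq, pt, Δ]
    ring_nf
  -- in the plane spanned by the time axis and the places of `p` and `q`, the two null lines
  -- through `p` meet the two through `q` at these points
  refine ⟨pt ((d + Δ) / 2) ((d + Δ) / (2 * d)), pt ((Δ - d) / 2) ((d - Δ) / (2 * d)),
    (hp _ _).2 ?_, (hq _ _).2 ?_, (hp _ _).2 ?_, (hq _ _).2 ?_, ?_⟩
  · field_simp
  · field_simp; ring
  · field_simp; ring
  · field_simp; ring
  · simp only [simul, pt, Matrix.cons_val_zero]
    intro h
    linarith

lemma SameLoc.eq_of_simul (h : SameLoc p q) (h0 : simul p q) : p = q := by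
  obtain ⟨h1, h2, h3⟩ := h
  funext i
  fin_cases i <;> assumption

lemma sameLoc_iff : SameLoc p q ↔ p = q ∨ ¬simul p q ∧
    ∀ u u', lightlike u p → lightlike u q → lightlike u' p → lightlike u' q → simul u u' := by
  refine ⟨fun h => or_iff_not_imp_left.2 fun hne => ?_, ?_⟩
  · have hs : ¬simul p q := fun h0 => hne (h.eq_of_simul h0)
    refine ⟨hs, fun u u' hup huq hu'p hu'q => ?_⟩
    have := TimeMid.of_lightlike_of_sameLoc h hs hup huq
    have := TimeMid.of_lightlike_of_sameLoc h hs hu'p hu'q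
    unfold TimeMid at *
    unfold simul
    linarith
  · rintro (rfl | ⟨-, hall⟩)
    · exact ⟨rfl, rfl, rfl⟩
    · by_contra h
      obtain ⟨u, u', hup, huq, hu'p, hu'q, hne⟩ := exists_lightlike_not_simul h
      exact hne (hall u u' hup huq hu'p hu'q)

lemma timeMid_iff : TimeMid x m y ↔ (simul x y → simul x m) ∧ ∃ a b c, SameLoc a m ∧ simul a x ∧
    SameLoc b m ∧ simul b y ∧ simul c m ∧ lightlike c a ∧ lightlike c b := by
  unfold TimeMid simul
  refine ⟨fun h => ⟨fun hxy => by linarith, ?_⟩, ?_⟩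
  · refine ⟨![x 0, m 1, m 2, m 3], ![y 0, m 1, m 2, m 3], ![m 0, m 1 + (x 0 - m 0), m 2, m 3],
      ⟨rfl, rfl, rfl⟩, rfl, ⟨rfl, rfl, rfl⟩, rfl, rfl, ?_, ?_⟩ <;>
      simp [lightlike_iff, spatialDistSq]
    · ring
    · linear_combination (y 0 - x 0) * h
  · rintro ⟨hxy, a, b, c, ham, hax, hbm, hby, hcm, hca, hcb⟩
    by_cases hab : a 0 = b 0
    · linarith [hxy (by rw [← hax, hab, hby])]
    · have := TimeMid.of_lightlike_of_sameLoc (ham.trans hbm.symm) hab hca hcb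
      unfold TimeMid at this
      linarith

lemma temporalCng_iff_exists_timeMid :
    temporalCng p q r s ↔ ∃ m, TimeMid p m s ∧ TimeMid q m r := by
  unfold temporalCng TimeMid
  refine ⟨fun h => ⟨![(p 0 + s 0) / 2, 0, 0, 0], ?_, ?_⟩, fun ⟨m, hps, hqr⟩ => by linarith⟩ <;>
  simp <;> linarith

lemma spatialCng_iff_exists_lightlike : spatialCng p q r s ↔ simul p q ∧ simul r s ∧
    ∃ a b, SameLoc a p ∧ lightlike a q ∧ SameLoc b r ∧ lightlike b s ∧ temporalCng a p b r := by
  rw [spatialCng_iff]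
  refine and_congr_right fun hpq => and_congr_right fun hrs => ⟨fun h => ?_, ?_⟩
  · obtain ⟨d, hd⟩ : ∃ d, d ^ 2 = spatialDistSq p q :=
      ⟨_, Real.sq_sqrt (spatialDistSq_nonneg p q)⟩
    let a : Pt := ![p 0 + d, p 1, p 2, p 3]
    let b : Pt := ![r 0 + d, r 1, r 2, r 3]
    have ha : SameLoc a p := ⟨rfl, rfl, rfl⟩
    have hb : SameLoc b r := ⟨rfl, rfl, rfl⟩
    refine ⟨a, b, ha, ?_, hb, ?_, ?_⟩
    · rw [lightlike_iff, ha.spatialDistSq_left, ← hd]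
      simp only [a, Matrix.cons_val_zero, show q 0 = p 0 from Eq.symm hpq]
      ring
    · rw [lightlike_iff, hb.spatialDistSq_left, ← h, ← hd]
      simp only [b, Matrix.cons_val_zero, show s 0 = r 0 from Eq.symm hrs]
      ring
    · simp [temporalCng, a, b]
  · rintro ⟨a, b, hap, haq, hbr, hbs, hab⟩
    rw [lightlike_iff, ← hap.symm.spatialDistSq_left, ← hpq] at haq
    rw [lightlike_iff, ← hbr.symm.spatialDistSq_left, ← hrs] at hbs
    unfold temporalCng at hab
    rw [← haq, ← hbs, hab]

/-- `u` and `u'` lie on the sphere in which the light cone of `w` meets the slice of `c`; they are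
antipodal on it (`y` certifies that they are a diameter apart) and equidistant from `c`, so `u - w`
is orthogonal to `c - w`. -/
def EuclRotation (c w u : Pt) : Prop :=
  simul c u ∧ lightlike u w ∧ ∃ u' y, simul c u' ∧ lightlike u' w ∧ SameLoc y u ∧ TimeMid c w y ∧
    lightlike y u' ∧ spatialCng c u c u'

lemma EuclRotation.euclCng (h : EuclRotation c w u) : euclCng c u c w := by
  obtain ⟨hcu, huw, u', y, hcu', hu'w, ⟨hy1, hy2, hy3⟩, hmid, hyu', hcng⟩ := h
  have hcng := (spatialCng_iff.1 hcng).2.2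
  have hy0 : y 0 = 2 * w 0 - c 0 := by unfold TimeMid at hmid; linarith
  unfold simul at hcu hcu'
  unfold lightlike at huw hu'w hyu'
  unfold spatialDistSq at hcng
  rw [← hcu] at huw
  rw [← hcu'] at hu'w hyu'
  rw [hy0, hy1, hy2, hy3] at hyu'
  obtain ⟨h1, h2, h3⟩ : u' 1 = 2 * w 1 - u 1 ∧ u' 2 = 2 * w 2 - u 2 ∧ u' 3 = 2 * w 3 - u 3 := by
    have : (u 1 + u' 1 - 2 * w 1) ^ 2 + (u 2 + u' 2 - 2 * w 2) ^ 2 + (u 3 + u' 3 - 2 * w 3) ^ 2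
        = 0 := by linear_combination -2 * huw - 2 * hu'w + hyu'
    obtain ⟨e1, e2, e3⟩ := eq_zero_of_sq_add_sq_add_sq this
    exact ⟨by linarith, by linarith, by linarith⟩
  rw [h1, h2, h3] at hcng
  unfold _root_.euclCng sqEucl
  simp only [Pi.sub_apply, ← hcu]
  linear_combination -huw + hcng / 2

lemma exists_euclRotation (c w : Pt) : ∃ u, EuclRotation c w u := by
  obtain ⟨n₁, n₂, n₃, horth, hn⟩ :=
    exists_orthogonal_sq_eq (c 1 - w 1) (c 2 - w 2) (c 3 - w 3) (c 0 - w 0)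
  refine ⟨![c 0, w 1 + n₁, w 2 + n₂, w 3 + n₃], rfl, ?_, ![c 0, w 1 - n₁, w 2 - n₂, w 3 - n₃],
    ![2 * w 0 - c 0, w 1 + n₁, w 2 + n₂, w 3 + n₃], rfl, ?_, ⟨rfl, rfl, rfl⟩, ?_, ?_, ?_⟩
  · simp [lightlike_iff, spatialDistSq, hn]
  · simp [lightlike_iff, spatialDistSq]
    linear_combination -hn
  · simp [TimeMid]
  · simp [lightlike_iff, spatialDistSq]
    linear_combination -4 * hn
  · rw [spatialCng_iff]
    refine ⟨rfl, rfl, ?_⟩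
    simp [spatialDistSq]
    linear_combination -4 * horth

lemma euclCng_iff_exists_euclRotation : euclCng p q r s ↔
    ∃ u u', EuclRotation p q u ∧ EuclRotation r s u' ∧ spatialCng p u r u' := by
  refine ⟨fun h => ?_, fun ⟨u, u', hu, hu', huu'⟩ => ?_⟩
  · obtain ⟨u, hu⟩ := exists_euclRotation p q
    obtain ⟨u', hu'⟩ := exists_euclRotation r s
    exact ⟨u, u', hu, hu', hu.1, hu'.1, hu.euclCng.trans (h.trans (Eq.symm hu'.euclCng))⟩
  · exact (Eq.symm hu.euclCng).trans (huu'.2.2.trans hu'.euclCng)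

lemma dist_toLp_sq (p q : Pt) :
    dist (WithLp.toLp 2 p : EuclideanSpace ℝ (Fin 4)) (WithLp.toLp 2 q) ^ 2 = sqEucl (p - q) := by
  rw [EuclideanSpace.dist_eq, Real.sq_sqrt (by positivity)]
  simp [sqEucl, Fin.sum_univ_four, Real.dist_eq, sq_abs]

lemma euclCng_iff_dist_eq : euclCng p q r s ↔
    dist (WithLp.toLp 2 p : EuclideanSpace ℝ (Fin 4)) (WithLp.toLp 2 q) =
      dist (WithLp.toLp 2 r : EuclideanSpace ℝ (Fin 4)) (WithLp.toLp 2 s) := by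
  rw [euclCng, ← dist_toLp_sq, ← dist_toLp_sq]
  exact sq_eq_sq₀ dist_nonneg dist_nonneg

lemma col_iff_mem_affineSpan_pair : Col p q r ↔ r = p ∨
    (WithLp.toLp 2 q : EuclideanSpace ℝ (Fin 4)) ∈ line[ℝ, WithLp.toLp 2 p, WithLp.toLp 2 r] := by
  rw [Col, or_comm, mem_affineSpan_pair_iff_exists_lineMap_eq]
  refine or_congr_right (exists_congr fun a => ?_)
  rw [AffineMap.lineMap_apply_module', ← WithLp.toLp_sub, ← WithLp.toLp_smul, ← WithLp.toLp_add,
    (WithLp.toLp_injective 2).eq_iff, add_comm, eq_comm]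

lemma col_iff_forall_euclCng : Col p q r ↔
    r = p ∨ ∀ w w', euclCng p w p w' → euclCng r w r w' → euclCng q w q w' := by
  simp only [col_iff_mem_affineSpan_pair, mem_affineSpan_pair_iff_forall_dist_eq,
    euclCng_iff_dist_eq, (WithLp.toLp_surjective 2).forall₂]

end Geometry

namespace LClassST

variable {α : Type*}

def simulF (i j : α) : classLang.Formula α := Relations.formula₂ (Sum.inl ⟨rfl⟩) (var i) (var j)

def lightlikeF (i j : α) : classLang.Formula α :=
  Relations.formula₂ (Sum.inr ⟨rfl⟩) (var i) (var j)

attribute [local instance] classStr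

@[simp] lemma realize_simulF (i j : α) (v : α → Pt) :
    (simulF i j).Realize v ↔ simul (v i) (v j) := Iff.rfl

@[simp] lemma realize_lightlikeF (i j : α) (v : α → Pt) :
    (lightlikeF i j).Realize v ↔ lightlike (v i) (v j) := Iff.rfl

noncomputable def sameLocF (i j : α) : classLang.Formula α :=
  Term.equal (var i) (var j) ⊔ (∼(simulF i j) ⊓ Formula.iAlls (Fin 2)
    (lightlikeF (.inr 0) (.inl i) ⟹ lightlikeF (.inr 0) (.inl j) ⟹
      lightlikeF (.inr 1) (.inl i) ⟹ lightlikeF (.inr 1) (.inl j) ⟹ simulF (.inr 0) (.inr 1)))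

@[simp] lemma realize_sameLocF (i j : α) (v : α → Pt) :
    (sameLocF i j).Realize v ↔ SameLoc (v i) (v j) := by
  simp [sameLocF, sameLoc_iff, Fin.forall_fin_succ_pi, Fin.forall_fin_zero_pi]

noncomputable def timeMidF (i j k : α) : classLang.Formula α :=
  (simulF i k ⟹ simulF i j) ⊓ Formula.iExs (Fin 3)
    (sameLocF (.inr 0) (.inl j) ⊓ simulF (.inr 0) (.inl i) ⊓
      sameLocF (.inr 1) (.inl j) ⊓ simulF (.inr 1) (.inl k) ⊓
      simulF (.inr 2) (.inl j) ⊓ lightlikeF (.inr 2) (.inr 0) ⊓ lightlikeF (.inr 2) (.inr 1))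

@[simp] lemma realize_timeMidF (i j k : α) (v : α → Pt) :
    (timeMidF i j k).Realize v ↔ TimeMid (v i) (v j) (v k) := by
  simp [timeMidF, timeMid_iff, Fin.exists_fin_succ_pi, Fin.exists_fin_zero_pi, and_assoc]

noncomputable def temporalCngF (i j k l : α) : classLang.Formula α :=
  Formula.iExs (Fin 1) (timeMidF (.inl i) (.inr 0) (.inl l) ⊓ timeMidF (.inl j) (.inr 0) (.inl k))

@[simp] lemma realize_temporalCngF (i j k l : α) (v : α → Pt) :
    (temporalCngF i j k l).Realize v ↔ temporalCng (v i) (v j) (v k) (v l) := by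
  simp [temporalCngF, temporalCng_iff_exists_timeMid, Fin.exists_fin_succ_pi,
    Fin.exists_fin_zero_pi]

noncomputable def spatialCngF (i j k l : α) : classLang.Formula α :=
  simulF i j ⊓ simulF k l ⊓ Formula.iExs (Fin 2)
    (sameLocF (.inr 0) (.inl i) ⊓ lightlikeF (.inr 0) (.inl j) ⊓
      sameLocF (.inr 1) (.inl k) ⊓ lightlikeF (.inr 1) (.inl l) ⊓
      temporalCngF (.inr 0) (.inl i) (.inr 1) (.inl k))

@[simp] lemma realize_spatialCngF (i j k l : α) (v : α → Pt) :
    (spatialCngF i j k l).Realize v ↔ spatialCng (v i) (v j) (v k) (v l) := by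
  simp [spatialCngF, spatialCng_iff_exists_lightlike, Fin.exists_fin_succ_pi,
    Fin.exists_fin_zero_pi, and_assoc]

noncomputable def euclRotationF (i j k : α) : classLang.Formula α :=
  simulF i k ⊓ lightlikeF k j ⊓ Formula.iExs (Fin 2)
    (simulF (.inl i) (.inr 0) ⊓ lightlikeF (.inr 0) (.inl j) ⊓ sameLocF (.inr 1) (.inl k) ⊓
      timeMidF (.inl i) (.inl j) (.inr 1) ⊓ lightlikeF (.inr 1) (.inr 0) ⊓
      spatialCngF (.inl i) (.inl k) (.inl i) (.inr 0))

@[simp] lemma realize_euclRotationF (i j k : α) (v : α → Pt) :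
    (euclRotationF i j k).Realize v ↔ EuclRotation (v i) (v j) (v k) := by
  simp [euclRotationF, EuclRotation, Fin.exists_fin_succ_pi, Fin.exists_fin_zero_pi, and_assoc]

noncomputable def euclCngF (i j k l : α) : classLang.Formula α :=
  Formula.iExs (Fin 2)
    (euclRotationF (.inl i) (.inl j) (.inr 0) ⊓ euclRotationF (.inl k) (.inl l) (.inr 1) ⊓
      spatialCngF (.inl i) (.inr 0) (.inl k) (.inr 1))

@[simp] lemma realize_euclCngF (i j k l : α) (v : α → Pt) :
    (euclCngF i j k l).Realize v ↔ euclCng (v i) (v j) (v k) (v l) := by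
  simp [euclCngF, euclCng_iff_exists_euclRotation, Fin.exists_fin_succ_pi,
    Fin.exists_fin_zero_pi, and_assoc]

noncomputable def colF (i j k : α) : classLang.Formula α :=
  Term.equal (var k) (var i) ⊔ Formula.iAlls (Fin 2)
    (euclCngF (.inl i) (.inr 0) (.inl i) (.inr 1) ⟹ euclCngF (.inl k) (.inr 0) (.inl k) (.inr 1) ⟹
      euclCngF (.inl j) (.inr 0) (.inl j) (.inr 1))

@[simp] lemma realize_colF (i j k : α) (v : α → Pt) :
    (colF i j k).Realize v ↔ Col (v i) (v j) (v k) := by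
  simp [colF, col_iff_forall_euclCng, Fin.forall_fin_succ_pi, Fin.forall_fin_zero_pi]

end LClassST

instance : galLang.IsRelational := fun _ => inferInstanceAs (IsEmpty Empty)

instance : classLang.IsRelational := fun _ => inferInstanceAs (IsEmpty Empty)

theorem ConOf.of_relMap {L₁ L₂ : Language} [L₁.IsRelational] {str₁ : L₁.Structure Pt}
    {str₂ : L₂.Structure Pt} (h : ∀ m (R : L₁.Relations m), ConOf L₂ str₂ {v | str₁.RelMap R v})
    {n : ℕ} {R : Set (Fin n → Pt)} (hR : ConOf L₁ str₁ R) : ConOf L₂ str₂ R :=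
  letI := str₁
  letI := str₂
  hR.of_relMap_definable h

section

attribute [local instance] classStr

open LClassST in
theorem conOf_classStr_galStr_relMap :
    ∀ m (R : galLang.Relations m), ConOf classLang classStr {v | galStr.RelMap R v}
  | _, .inl (.inl ⟨rfl⟩) => empty_definable_iff.2
    ⟨spatialCngF 0 1 2 3, Set.ext fun v => (realize_spatialCngF 0 1 2 3 v).symm⟩
  | _, .inl (.inr ⟨rfl⟩) => empty_definable_iff.2
    ⟨temporalCngF 0 1 2 3, Set.ext fun v => (realize_temporalCngF 0 1 2 3 v).symm⟩
  | _, .inr (.inl ⟨rfl⟩) => empty_definable_iff.2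
    ⟨colF 0 1 2, Set.ext fun v => (realize_colF 0 1 2 v).symm⟩
  | _, .inr (.inr ⟨rfl⟩) => empty_definable_iff.2
    ⟨lightlikeF 0 1, Set.ext fun v => (realize_lightlikeF 0 1 v).symm⟩

end

section

attribute [local instance] galStr

theorem conOf_galStr_classStr_relMap :
    ∀ m (R : classLang.Relations m), ConOf galLang galStr {v | classStr.RelMap R v}
  | _, .inl ⟨rfl⟩ => empty_definable_iff.2
    ⟨Relations.formula (Sum.inl (Sum.inl ⟨rfl⟩)) ![var 0, var 1, var 0, var 1],
      Set.ext fun _ => ⟨fun h => ⟨h, h, rfl⟩, fun h => h.1⟩⟩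
  | _, .inr ⟨rfl⟩ => empty_definable_iff.2
    ⟨Relations.formula (Sum.inr (Sum.inr ⟨rfl⟩)) ![var 0, var 1], Set.ext fun _ => Iff.rfl⟩

end

/-- Galilean spacetime extended with lightlike relatedness is definitionally
equivalent to late classical spacetime: ⟨GalST, λ⟩ and LClassST = ⟨ℝ⁴, S, λ⟩ have
exactly the same concepts. -/
theorem galST_lightlike_defEquiv_lclassST :
    ∀ (n : ℕ) (R : Set (Fin n → Pt)),
      ConOf galLang galStr R ↔ ConOf classLang classStr R :=
  fun _ _ => ⟨ConOf.of_relMap conOf_classStr_galStr_relMap,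
    ConOf.of_relMap conOf_galStr_classStr_relMap⟩
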